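/- arXiv:1703.10127 — 4 statements merged into one kernel-verified Lean document; each statement's English description precedes it below -/
import Mathlib

section
/- If a mechanism M satisfies (ε,0)-differential privacy, then for all neighboring inputs D, D' and all α ∈ (1,∞), the α-Rényi divergence satisfies D_α(M(D) || M(D')) ≤ (ε²/2)·α; i.e., M satisfies (ε²/2)-zCDP. -/
/-!
Write the Rényi sum as `∑ Q (P/Q)^α` with every ratio `P/Q` in `[e^{-ε}, e^ε]`. Convexity of
`y ↦ y^α` bounds it by its value on the two-point distribution on the endpoints of that interval
with the same mean `1`, namely `cosh(ε(α - 1/2)) / cosh(ε/2)`. Since `x²/2 - log cosh x` is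
increasing on `[0, ∞)` (its derivative is `x - tanh x`), the logarithm of this ratio is at most
`((ε(α - 1/2))² - (ε/2)²)/2 = ε²α(α - 1)/2`.
-/

open Finset Real

theorem Real.sinh_le_mul_cosh {x : ℝ} (hx : 0 ≤ x) : sinh x ≤ x * cosh x := by
  have hmono : MonotoneOn (fun t : ℝ => t * cosh t - sinh t) (Set.Ici 0) := by
    refine monotoneOn_of_deriv_nonneg (convex_Ici 0) (by fun_prop) (by fun_prop) fun t ht => ?_
    have hderiv : HasDerivAt (fun t : ℝ => t * cosh t - sinh t) (t * sinh t) t :=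
      (((hasDerivAt_id t).mul (hasDerivAt_cosh t)).sub (hasDerivAt_sinh t)).congr_deriv
        (by simp only [id, one_mul, add_sub_cancel_left])
    rw [interior_Ici] at ht
    rw [hderiv.deriv]
    exact mul_nonneg (le_of_lt ht) (sinh_nonneg_iff.2 (le_of_lt ht))
  simpa using hmono Set.self_mem_Ici hx hx

theorem Real.log_cosh_sub_log_cosh_le {s t : ℝ} (hs : 0 ≤ s) (hst : s ≤ t) :
    log (cosh t) - log (cosh s) ≤ (t ^ 2 - s ^ 2) / 2 := by
  have hmono : MonotoneOn (fun x : ℝ => x ^ 2 / 2 - log (cosh x)) (Set.Ici 0) := by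
    have hdiff : Differentiable ℝ (fun x : ℝ => x ^ 2 / 2 - log (cosh x)) :=
      by fun_prop (disch := exact fun x => (cosh_pos x).ne')
    refine monotoneOn_of_deriv_nonneg (convex_Ici 0) hdiff.continuous.continuousOn
      hdiff.differentiableOn fun x hx => ?_
    have hderiv : HasDerivAt (fun x : ℝ => x ^ 2 / 2 - log (cosh x)) (x - sinh x / cosh x) x :=
      (((hasDerivAt_pow 2 x).div_const 2).sub
        ((hasDerivAt_cosh x).log (cosh_pos x).ne')).congr_deriv (by norm_num)
    rw [interior_Ici] at hx
    rw [hderiv.deriv, sub_nonneg, div_le_iff₀ (cosh_pos x)]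
    exact sinh_le_mul_cosh (le_of_lt hx)
  have h := hmono hs (hs.trans hst) hst
  simp only at h
  linarith

theorem ConvexOn.sub_mul_le_chord {𝕜 : Type*} [Field 𝕜] [LinearOrder 𝕜] [IsStrictOrderedRing 𝕜]
    {s : Set 𝕜} {f : 𝕜 → 𝕜} (hf : ConvexOn 𝕜 s f) {x y z : 𝕜} (hx : x ∈ s) (hz : z ∈ s)
    (hxy : x ≤ y) (hyz : y ≤ z) : (z - x) * f y ≤ (z - y) * f x + (y - x) * f z := by
  rcases hxy.eq_or_lt with rfl | hxy
  · simp
  rcases hyz.eq_or_lt with rfl | hyz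
  · simp
  exact hf.secant_mono_aux1 hx hz hxy hyz

theorem sub_mul_sum_mul_le_of_ratio_mem_Icc {ι : Type*} [Fintype ι] {m M : ℝ} {f : ℝ → ℝ}
    (hf : ConvexOn ℝ (Set.Icc m M) f) {P Q : ι → ℝ} (hQ0 : ∀ i, 0 < Q i)
    (hmP : ∀ i, m * Q i ≤ P i) (hPM : ∀ i, P i ≤ M * Q i)
    (hP1 : ∑ i, P i = 1) (hQ1 : ∑ i, Q i = 1) :
    (M - m) * ∑ i, Q i * f (P i / Q i) ≤ (M - 1) * f m + (1 - m) * f M := by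
  have pointwise (i : ι) :
      (M - m) * (Q i * f (P i / Q i)) ≤ (M * Q i - P i) * f m + (P i - m * Q i) * f M := by
    have hq := hQ0 i
    have hm : m ≤ P i / Q i := (le_div_iff₀ hq).2 (hmP i)
    have hM : P i / Q i ≤ M := (div_le_iff₀ hq).2 (hPM i)
    have hchord := hf.sub_mul_le_chord ⟨le_rfl, hm.trans hM⟩ ⟨hm.trans hM, le_rfl⟩ hm hM
    have key := mul_le_mul_of_nonneg_left hchord hq.le
    have e1 : Q i * (M - P i / Q i) = M * Q i - P i := by field_simp
    have e2 : Q i * (P i / Q i - m) = P i - m * Q i := by field_simp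
    linear_combination key + f m * e1 + f M * e2
  calc (M - m) * ∑ i, Q i * f (P i / Q i)
      ≤ ∑ i, ((M * Q i - P i) * f m + (P i - m * Q i) * f M) := by
        rw [mul_sum]; exact sum_le_sum fun i _ => pointwise i
    _ = (M - 1) * f m + (1 - m) * f M := by
        simp only [sum_add_distrib, ← sum_mul, sum_sub_distrib, ← mul_sum, hP1, hQ1, mul_one]

theorem rpow_mul_rpow_one_sub {p q : ℝ} (hp : 0 ≤ p) (hq : 0 < q) (α : ℝ) :
    p ^ α * q ^ (1 - α) = q * (p / q) ^ α := by
  rw [div_rpow hp hq.le, rpow_sub hq, rpow_one]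
  field_simp

theorem exp_chord_eq (ε a : ℝ) :
    (exp ε - 1) * exp (-ε) ^ a + (1 - exp (-ε)) * exp ε ^ a =
      4 * sinh (ε / 2) * cosh (ε * (a - 1 / 2)) := by
  have hu : exp ε = exp (ε / 2) ^ 2 := by rw [← exp_nat_mul]; ring_nf
  have hv : exp ε ^ a = exp (ε * (a - 1 / 2)) * exp (ε / 2) := by
    rw [← exp_mul, ← exp_add]; ring_nf
  have hw : exp (-ε) ^ a = (exp (ε * (a - 1 / 2)) * exp (ε / 2))⁻¹ := by
    rw [← hv, ← exp_mul, ← exp_mul, ← exp_neg]; ring_nf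
  rw [hv, hw, exp_neg, hu, sinh_eq, cosh_eq, exp_neg, exp_neg]
  field_simp
  ring

theorem exp_sub_exp_neg_eq (ε : ℝ) : exp ε - exp (-ε) = 4 * sinh (ε / 2) * cosh (ε / 2) := by
  have h := sinh_two_mul (ε / 2)
  rw [sinh_eq, show 2 * (ε / 2) = ε by ring] at h
  linarith

theorem sum_rpow_mul_rpow_one_sub_le_cosh_div_cosh {ι : Type*} [Fintype ι] {ε : ℝ} (hε : 0 ≤ ε)
    {P Q : ι → ℝ} (hP0 : ∀ i, 0 ≤ P i) (hQ0 : ∀ i, 0 < Q i)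
    (hP1 : ∑ i, P i = 1) (hQ1 : ∑ i, Q i = 1)
    (hPQ : ∀ i, P i ≤ exp ε * Q i) (hQP : ∀ i, Q i ≤ exp ε * P i) {α : ℝ} (hα : 1 ≤ α) :
    ∑ i, P i ^ α * Q i ^ (1 - α) ≤ cosh (ε * (α - 1 / 2)) / cosh (ε / 2) := by
  simp only [rpow_mul_rpow_one_sub (hP0 _) (hQ0 _)]
  rcases hε.eq_or_lt with rfl | hε
  · have hPQ_eq (i : ι) : P i / Q i = 1 := by
      have h₁ := hPQ i
      have h₂ := hQP i
      rw [exp_zero, one_mul] at h₁ h₂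
      rw [div_eq_one_iff_eq (hQ0 i).ne']
      linarith
    simp [hPQ_eq, hQ1]
  have hmP (i : ι) : exp (-ε) * Q i ≤ P i := by
    calc exp (-ε) * Q i ≤ exp (-ε) * (exp ε * P i) := by gcongr; exact hQP i
      _ = P i := by rw [← mul_assoc, ← exp_add, neg_add_cancel, exp_zero, one_mul]
  have hconv : ConvexOn ℝ (Set.Icc (exp (-ε)) (exp ε)) (fun y : ℝ => y ^ α) :=
    (convexOn_rpow hα).subset (fun y hy => (exp_pos _).le.trans hy.1) (convex_Icc _ _)
  have hbound := sub_mul_sum_mul_le_of_ratio_mem_Icc hconv hQ0 hmP hPQ hP1 hQ1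
  rw [exp_chord_eq, exp_sub_exp_neg_eq] at hbound
  have hsinh : 0 < 4 * sinh (ε / 2) := by have := sinh_pos_iff.2 (half_pos hε); positivity
  rw [le_div_iff₀ (cosh_pos _)]
  refine le_of_mul_le_mul_left ?_ hsinh
  linear_combination hbound

/-- If the output distributions `P, Q` of a mechanism on two neighboring inputs satisfy the
pointwise `(ε,0)`-differential privacy guarantee, then for every `α > 1` the α-Rényi divergence
`D_α(P‖Q)` is at most `(ε²/2)·α`; i.e., `(ε,0)`-DP implies `(ε²/2)`-zCDP. -/
theorem stmt_11 {O : Type*} [Fintype O] (ε : ℝ) (hε : 0 ≤ ε)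
    (P Q : O → ℝ) (hP0 : ∀ x, 0 < P x) (hQ0 : ∀ x, 0 < Q x)
    (hP1 : ∑ x : O, P x = 1) (hQ1 : ∑ x : O, Q x = 1)
    (hPQ : ∀ x, P x ≤ Real.exp ε * Q x) (hQP : ∀ x, Q x ≤ Real.exp ε * P x) :
    ∀ α : ℝ, 1 < α →
      (1 / (α - 1)) * Real.log (∑ x : O, P x ^ α * Q x ^ (1 - α)) ≤ (ε^2 / 2) * α := by
  intro α hα
  have hα1 : 0 < α - 1 := sub_pos.2 hα
  have hnonempty : (univ : Finset O).Nonempty := by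
    by_contra h
    simp [not_nonempty_iff_eq_empty.1 h] at hP1
  have hsum_pos : 0 < ∑ x : O, P x ^ α * Q x ^ (1 - α) :=
    sum_pos (fun x _ => by have := hP0 x; have := hQ0 x; positivity) hnonempty
  have hlog : Real.log (∑ x : O, P x ^ α * Q x ^ (1 - α)) ≤ ε ^ 2 / 2 * α * (α - 1) :=
    calc Real.log (∑ x : O, P x ^ α * Q x ^ (1 - α))
        ≤ log (cosh (ε * (α - 1 / 2)) / cosh (ε / 2)) :=
          log_le_log hsum_pos (sum_rpow_mul_rpow_one_sub_le_cosh_div_cosh hε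
            (fun x => (hP0 x).le) hQ0 hP1 hQ1 hPQ hQP hα.le)
      _ = log (cosh (ε * (α - 1 / 2))) - log (cosh (ε / 2)) :=
          log_div (cosh_pos _).ne' (cosh_pos _).ne'
      _ ≤ ((ε * (α - 1 / 2)) ^ 2 - (ε / 2) ^ 2) / 2 :=
          log_cosh_sub_log_cosh_le (by positivity) (by nlinarith)
      _ = ε ^ 2 / 2 * α * (α - 1) := by ring
  calc (1 / (α - 1)) * Real.log (∑ x : O, P x ^ α * Q x ^ (1 - α))
      ≤ (1 / (α - 1)) * (ε ^ 2 / 2 * α * (α - 1)) := by gcongr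
    _ = (ε ^ 2 / 2) * α := by field_simp
end

section
/- If a mechanism M satisfies ρ-zCDP, then M satisfies (ρ + 2√(ρ log(1/δ)), δ)-differential privacy for every δ > 0. -/
/-!
Write `ε = ρ + 2√(ρ L)` with `L = log (1/δ)`. Pointwise, `P x ≤ e^ε Q x` unless the privacy
loss `log (P x / Q x)` exceeds `ε`, and in that case `P x ≤ e^{-(α-1)ε} P x ^ α Q x ^ (1-α)`
(a Chernoff bound). Summing, `P(S) ≤ e^ε Q(S) + e^{-(α-1)ε} ∑ P^α Q^(1-α)`, and the zCDP
hypothesis bounds the last sum by `e^{(α-1)αρ}`. For `ρ > 0` the choice `α = 1 + √(L/ρ)` makes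
the total exponent `-L`, giving `δ`. The case `ρ = 0` follows by letting `ρ' ↓ ρ`, since a
`ρ`-zCDP pair is `ρ'`-zCDP and the bound is continuous in `ρ'`.
-/

open Finset Real

theorem le_exp_mul_add_exp_mul_rpow_mul_rpow {p q α : ℝ} (ε : ℝ) (hp : 0 ≤ p) (hq : 0 < q)
    (hα : 1 ≤ α) :
    p ≤ exp ε * q + exp (-((α - 1) * ε)) * (p ^ α * q ^ (1 - α)) := by
  rcases le_or_gt p (exp ε * q) with h | h
  · have : 0 ≤ exp (-((α - 1) * ε)) * (p ^ α * q ^ (1 - α)) := by positivity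
    linarith
  · have hp : 0 < p := (by positivity : 0 < exp ε * q).trans h
    have hratio : 1 ≤ p / (exp ε * q) := (one_le_div (by positivity)).2 h.le
    have hrw : exp (-((α - 1) * ε)) * (p ^ α * q ^ (1 - α)) =
        p * (p / (exp ε * q)) ^ (α - 1) := by
      rw [div_rpow hp.le (by positivity), mul_rpow (by positivity) hq.le, ← exp_mul,
        rpow_sub_one hp.ne', show 1 - α = -(α - 1) by ring, rpow_neg hq.le, exp_neg,
        mul_comm ε]
      field_simp
    rw [hrw]
    have : p ≤ p * (p / (exp ε * q)) ^ (α - 1) :=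
      le_mul_of_one_le_right hp.le (one_le_rpow hratio (by linarith))
    linarith [(by positivity : 0 < exp ε * q)]

theorem sum_le_exp_mul_sum_add_exp_mul_sum_rpow {O : Type*} [Fintype O] {P Q : O → ℝ}
    (hP : ∀ x, 0 ≤ P x) (hQ : ∀ x, 0 < Q x) {α : ℝ} (hα : 1 ≤ α) (ε : ℝ) (S : Finset O) :
    ∑ x ∈ S, P x ≤
      exp ε * ∑ x ∈ S, Q x + exp (-((α - 1) * ε)) * ∑ x, P x ^ α * Q x ^ (1 - α) :=
  calc ∑ x ∈ S, P x
      ≤ ∑ x ∈ S, (exp ε * Q x + exp (-((α - 1) * ε)) * (P x ^ α * Q x ^ (1 - α))) :=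
        sum_le_sum fun x _ => le_exp_mul_add_exp_mul_rpow_mul_rpow ε (hP x) (hQ x) hα
    _ = exp ε * ∑ x ∈ S, Q x + exp (-((α - 1) * ε)) * ∑ x ∈ S, P x ^ α * Q x ^ (1 - α) := by
        rw [sum_add_distrib, mul_sum, mul_sum]
    _ ≤ _ := by
        gcongr _ + _ * ?_
        refine sum_le_sum_of_subset_of_nonneg (subset_univ S) fun x _ _ => ?_
        have := hP x; have := hQ x; positivity

theorem le_exp_of_renyi_le {T ρ α : ℝ} (hα : 1 < α) (h : 1 / (α - 1) * log T ≤ ρ * α) :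
    T ≤ exp ((α - 1) * (ρ * α)) := by
  refine (le_exp_log T).trans (exp_le_exp.2 ?_)
  rwa [one_div_mul_eq_div, div_le_iff₀' (by linarith)] at h

theorem sum_le_exp_mul_sum_add_of_zCDP_of_pos {O : Type*} [Fintype O] {ρ : ℝ} (hρ : 0 < ρ)
    {P Q : O → ℝ} (hP : ∀ x, 0 ≤ P x) (hQ : ∀ x, 0 < Q x)
    (hzCDP : ∀ α : ℝ, 1 < α →
      (1 / (α - 1)) * log (∑ x : O, P x ^ α * Q x ^ (1 - α)) ≤ ρ * α)
    {δ : ℝ} (hδ : 0 < δ) (hδ1 : δ < 1) (S : Finset O) :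
    ∑ x ∈ S, P x ≤ exp (ρ + 2 * √(ρ * log (1 / δ))) * ∑ x ∈ S, Q x + δ := by
  set L := log (1 / δ)
  set s := √(ρ * L)
  have hL : 0 < L := log_pos (one_lt_one_div hδ hδ1)
  have hs : 0 < s := sqrt_pos.2 (by positivity)
  have hs2 : s ^ 2 = ρ * L := sq_sqrt (by positivity)
  -- `α = 1 + √(L/ρ)` minimises the tail exponent `(α - 1)(ρα - ε)`, which is then `-L`
  set α := 1 + s / ρ
  have hα : 1 < α := by simp only [α]; linarith [div_pos hs hρ]
  have htail : -((α - 1) * (ρ + 2 * s)) + (α - 1) * (ρ * α) = log δ := by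
    rw [show log δ = -L by simp [L]]
    simp only [α]
    field_simp
    linear_combination -hs2
  calc ∑ x ∈ S, P x
      ≤ exp (ρ + 2 * s) * ∑ x ∈ S, Q x
          + exp (-((α - 1) * (ρ + 2 * s))) * ∑ x, P x ^ α * Q x ^ (1 - α) :=
        sum_le_exp_mul_sum_add_exp_mul_sum_rpow hP hQ hα.le _ S
    _ ≤ exp (ρ + 2 * s) * ∑ x ∈ S, Q x
          + exp (-((α - 1) * (ρ + 2 * s))) * exp ((α - 1) * (ρ * α)) := by
        gcongr
        exact le_exp_of_renyi_le hα (hzCDP α hα)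
    _ = exp (ρ + 2 * s) * ∑ x ∈ S, Q x + δ := by
        rw [← exp_add, htail, exp_log hδ]

theorem stmt_12_general {O : Type*} [Fintype O] (ρ : ℝ) (hρ : 0 ≤ ρ)
    (P Q : O → ℝ) (hP0 : ∀ x, 0 < P x) (hQ0 : ∀ x, 0 < Q x)
    (hP1 : ∑ x : O, P x = 1)
    (hzCDP : ∀ α : ℝ, 1 < α →
      (1 / (α - 1)) * Real.log (∑ x : O, P x ^ α * Q x ^ (1 - α)) ≤ ρ * α)
    (δ : ℝ) (hδ : 0 < δ) :
    ∀ S : Finset O,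
      ∑ x ∈ S, P x ≤ Real.exp (ρ + 2 * Real.sqrt (ρ * Real.log (1 / δ))) * ∑ x ∈ S, Q x + δ := by
  intro S
  rcases le_or_gt 1 δ with hδ1 | hδ1
  · have hPS : ∑ x ∈ S, P x ≤ 1 := hP1 ▸ sum_le_univ_sum_of_nonneg fun x => (hP0 x).le
    have hQS : 0 ≤ ∑ x ∈ S, Q x := sum_nonneg fun x _ => (hQ0 x).le
    have : 0 ≤ exp (ρ + 2 * √(ρ * log (1 / δ))) * ∑ x ∈ S, Q x := by positivity
    linarith
  have hcont : Continuous fun r => exp (r + 2 * √(r * log (1 / δ))) * ∑ x ∈ S, Q x + δ := by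
    fun_prop
  refine ge_of_tendsto (hcont.continuousAt.tendsto.mono_left nhdsWithin_le_nhds)
    (eventually_nhdsWithin_of_forall (s := Set.Ioi ρ) fun r hr => ?_)
  refine sum_le_exp_mul_sum_add_of_zCDP_of_pos (hρ.trans_lt hr) (fun x => (hP0 x).le) hQ0
    (fun α hα => (hzCDP α hα).trans ?_) hδ hδ1 S
  gcongr
  exact le_of_lt hr

/-- If the output distributions `P, Q` of a mechanism on neighboring inputs satisfy the
`ρ`-zCDP Rényi divergence bound `D_α(P‖Q) ≤ ρα` for all `α > 1`, then they satisfy the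
`(ρ + 2√(ρ log(1/δ)), δ)`-differential privacy guarantee for every `δ > 0`. -/
theorem stmt_12 {O : Type*} [Fintype O] (ρ : ℝ) (hρ : 0 ≤ ρ)
    (P Q : O → ℝ) (hP0 : ∀ x, 0 < P x) (hQ0 : ∀ x, 0 < Q x)
    (hP1 : ∑ x : O, P x = 1) (hQ1 : ∑ x : O, Q x = 1)
    (hzCDP : ∀ α : ℝ, 1 < α →
      (1 / (α - 1)) * Real.log (∑ x : O, P x ^ α * Q x ^ (1 - α)) ≤ ρ * α)
    (δ : ℝ) (hδ : 0 < δ) :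
    ∀ S : Finset O,
      ∑ x ∈ S, P x ≤ Real.exp (ρ + 2 * Real.sqrt (ρ * Real.log (1 / δ))) * ∑ x ∈ S, Q x + δ :=
  stmt_12_general ρ hρ P Q hP0 hQ0 hP1 hzCDP δ hδ
end

section
/- If X ~ Poisson(λ) with λ ≤ e^{-3}·log n and k satisfies kλ = log n with k ≥ e³, then Pr[|X - λ| ≥ kλ] ≤ (k/(k-1))·exp(-λ + kλ - kλ log k), and this bound is at most 1.1·n^{-2} for n ≥ 3. -/
open MeasureTheory ProbabilityTheory Real
open scoped NNReal Nat

/-!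
For `k > 1` the lower deviation `X ≤ λ - kλ` is impossible, so only the upper tail
`X ≥ ⌈kλ⌉` matters. Writing `λ = (kλ)/k` and using `(kλ)^i / i! ≤ e^{kλ}`, every Poisson weight
is at most `e^{(k-1)λ} k^{-i}`; summing this geometric bound from `⌈kλ⌉` on gives the factor
`k/(k-1)` and `k^{-⌈kλ⌉} ≤ e^{-kλ log k}`. With `kλ = log n` and `log k ≥ 3` the exponent is at
most `-2 log n`, and `k ≥ e³ > 11` gives `k/(k-1) ≤ 1.1`.
-/

theorem le_of_mul_le_abs_sub {k lam x : ℝ} (hk : 1 < k) (hlam : 0 ≤ lam) (hx : 0 ≤ x)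
    (h : k * lam ≤ |x - lam|) : k * lam ≤ x := by
  rcases le_or_gt lam x with hle | hlt
  · rw [abs_of_nonneg (sub_nonneg.2 hle)] at h
    linarith
  · rw [abs_of_neg (sub_neg.2 hlt)] at h
    nlinarith

theorem measure_Ici_le_of_singleton_le_geometric (μ : Measure ℕ) {C r : ℝ} (hC : 0 ≤ C)
    (hr₀ : 0 ≤ r) (hr₁ : r < 1) (h : ∀ i, μ {i} ≤ ENNReal.ofReal (C * r ^ i)) (m : ℕ) :
    μ (Set.Ici m) ≤ ENNReal.ofReal (C * r ^ m / (1 - r)) := by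
  have hunion : Set.Ici m = ⋃ j : ℕ, {m + j} := by
    ext x
    simp only [Set.mem_Ici, Set.mem_iUnion, Set.mem_singleton_iff]
    exact ⟨fun hx => ⟨x - m, by omega⟩, by rintro ⟨j, rfl⟩; omega⟩
  calc μ (Set.Ici m) ≤ ∑' j : ℕ, μ {m + j} := hunion ▸ measure_iUnion_le _
    _ ≤ ∑' j : ℕ, ENNReal.ofReal (C * r ^ m * r ^ j) :=
        ENNReal.tsum_le_tsum fun j => by rw [mul_assoc, ← pow_add]; exact h _
    _ = ENNReal.ofReal (∑' j : ℕ, C * r ^ m * r ^ j) :=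
        (ENNReal.ofReal_tsum_of_nonneg (fun j => by positivity)
          ((summable_geometric_of_lt_one hr₀ hr₁).mul_left _)).symm
    _ = ENNReal.ofReal (C * r ^ m / (1 - r)) := by
        rw [tsum_mul_left, tsum_geometric_of_lt_one hr₀ hr₁, div_eq_mul_inv]

theorem poissonMeasure_singleton_le (lam : ℝ≥0) {k : ℝ} (hk : 0 < k) (i : ℕ) :
    poissonMeasure lam {i} ≤ ENNReal.ofReal (exp ((k - 1) * lam) * k⁻¹ ^ i) := by
  rw [poissonMeasure_singleton]
  refine ENNReal.ofReal_le_ofReal ?_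
  calc exp (-lam) * lam ^ i / i ! = exp (-lam) * k⁻¹ ^ i * ((k * lam) ^ i / i !) := by
        rw [mul_pow, inv_pow]
        field_simp
    _ ≤ exp (-lam) * k⁻¹ ^ i * exp (k * lam) := by
        gcongr
        exact pow_div_factorial_le_exp _ (by positivity) i
    _ = exp ((k - 1) * lam) * k⁻¹ ^ i := by
        rw [mul_right_comm, ← exp_add]
        ring_nf

theorem inv_pow_le_exp_neg_mul_log {k x : ℝ} (hk : 1 ≤ k) {m : ℕ} (hm : x ≤ m) :
    k⁻¹ ^ m ≤ exp (-(x * log k)) := by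
  calc k⁻¹ ^ m = exp (-(m * log k)) := by
        rw [exp_neg, exp_nat_mul, exp_log (by linarith), inv_pow]
    _ ≤ exp (-(x * log k)) :=
        exp_le_exp.2 (neg_le_neg (mul_le_mul_of_nonneg_right hm (log_nonneg hk)))

theorem poissonMeasure_abs_sub_ge_le (lam : ℝ≥0) {k : ℝ} (hk : 1 < k) :
    poissonMeasure lam {x : ℕ | k * lam ≤ |(x : ℝ) - lam|}
      ≤ ENNReal.ofReal (k / (k - 1) * exp (-lam + k * lam - k * lam * log k)) := by
  have hk₀ : 0 < k := zero_lt_one.trans hk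
  have hsub : {x : ℕ | k * lam ≤ |(x : ℝ) - lam|} ⊆ Set.Ici ⌈k * lam⌉₊ := fun x hx =>
    Nat.ceil_le.2 (le_of_mul_le_abs_sub hk lam.2 x.cast_nonneg hx)
  have htail := measure_Ici_le_of_singleton_le_geometric (poissonMeasure lam) (exp_pos _).le
    (inv_nonneg.2 hk₀.le) (inv_lt_one_of_one_lt₀ hk)
    (poissonMeasure_singleton_le lam hk₀) ⌈k * lam⌉₊
  refine (measure_mono hsub).trans (htail.trans (ENNReal.ofReal_le_ofReal ?_))
  have hden : 1 - k⁻¹ = (k - 1) / k := by field_simp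
  calc exp ((k - 1) * lam) * k⁻¹ ^ ⌈k * lam⌉₊ / (1 - k⁻¹)
      ≤ exp ((k - 1) * lam) * exp (-(k * lam * log k)) / (1 - k⁻¹) := by
        gcongr
        · exact sub_nonneg.2 (inv_le_one_of_one_le₀ hk.le)
        · exact inv_pow_le_exp_neg_mul_log hk.le (Nat.le_ceil _)
    _ = k / (k - 1) * exp (-lam + k * lam - k * lam * log k) := by
        rw [hden, ← exp_add, div_div_eq_mul_div, mul_comm]
        ring_nf

theorem div_sub_one_mul_exp_le_rpow_neg_two {k lam : ℝ} {n : ℕ} (hk : exp 3 ≤ k)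
    (hlam : 0 ≤ lam) (hn : 1 ≤ n) (hklam : k * lam = log n) :
    k / (k - 1) * exp (-lam + k * lam - k * lam * log k) ≤ 1.1 * (n : ℝ) ^ (-2 : ℝ) := by
  have h11 : 11 ≤ k := by
    have := sum_le_exp_of_nonneg (x := 3) (by norm_num) 5
    norm_num [Finset.sum_range_succ, Nat.factorial] at this
    linarith
  have hfrac : k / (k - 1) ≤ 1.1 := by
    rw [div_le_iff₀ (by linarith)]
    linarith
  have hlogk : 3 ≤ log k := (le_log_iff_exp_le (by linarith)).2 hk
  have hlogn : 0 ≤ log n := log_nonneg (by exact_mod_cast hn)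
  have hexp : exp (-lam + k * lam - k * lam * log k) ≤ (n : ℝ) ^ (-2 : ℝ) := by
    rw [rpow_def_of_pos (by exact_mod_cast hn), ← hklam]
    exact exp_le_exp.2 (by nlinarith)
  exact mul_le_mul hfrac hexp (exp_pos _).le (by norm_num)

theorem stmt_15_general (lam : NNReal) (n : ℕ) (hn : 3 ≤ n) (k : ℝ)
    (hk : Real.exp 3 ≤ k)
    (hklam : k * (lam : ℝ) = Real.log n) :
    poissonMeasure lam {x : ℕ | k * (lam : ℝ) ≤ |(x : ℝ) - (lam : ℝ)|}
      ≤ ENNReal.ofReal ((k / (k - 1)) * Real.exp (-(lam : ℝ) + k * lam - k * lam * Real.log k)) ∧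
    (k / (k - 1)) * Real.exp (-(lam : ℝ) + k * lam - k * lam * Real.log k)
      ≤ 1.1 * (n : ℝ)^(-2 : ℝ) :=
  ⟨poissonMeasure_abs_sub_ge_le lam ((one_lt_exp_iff.2 (by norm_num)).trans_le hk),
    div_sub_one_mul_exp_le_rpow_neg_two hk lam.2 (by omega) hklam⟩

/-- Poisson tail bound in the small-mean regime: if `X ~ Poisson(λ)` with
`λ ≤ e⁻³ log n` and `kλ = log n` with `k ≥ e³`, then
`Pr[|X - λ| ≥ kλ] ≤ (k/(k-1))·exp(-λ + kλ - kλ log k) ≤ 1.1·n⁻²` for `n ≥ 3`. -/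
theorem stmt_15 (lam : NNReal) (hlam : 0 < lam) (n : ℕ) (hn : 3 ≤ n) (k : ℝ)
    (hk : Real.exp 3 ≤ k)
    (hsmall : (lam : ℝ) ≤ Real.exp (-3) * Real.log n)
    (hklam : k * (lam : ℝ) = Real.log n) :
    poissonMeasure lam {x : ℕ | k * (lam : ℝ) ≤ |(x : ℝ) - (lam : ℝ)|}
      ≤ ENNReal.ofReal ((k / (k - 1)) * Real.exp (-(lam : ℝ) + k * lam - k * lam * Real.log k)) ∧
    (k / (k - 1)) * Real.exp (-(lam : ℝ) + k * lam - k * lam * Real.log k)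
      ≤ 1.1 * (n : ℝ)^(-2 : ℝ) :=
  stmt_15_general lam n hn k hk hklam
end

section
/- If X ~ Poisson(λ) with λ ≥ e^{-3} log n and n ≥ 2, then Pr[|X - λ| ≥ 4√(λ log n)] ≤ 2n^{-1.84}. -/
/-!
Chernoff's bound with the Poisson moment generating function `exp (λ (eᵗ - 1))`, taken at
`t = log (1 + x / λ)` and at `t = -x / λ`, gives `Pr[X ≥ λ + x] ≤ exp (-λ h (x / λ))` with Bennett's
`h u = (1 + u) log (1 + u) - u = u² ψ(u) / 2`, and `Pr[X ≤ λ - x] ≤ exp (-x² / 2λ)`.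
For `x = 4 √(λ log n)` we have `λ (x / λ)² = 16 log n`, and `λ ≥ e⁻³ log n` means `x / λ ≤ 4 e^{3/2}`,
where `h u ≥ 0.115 u²`. So each tail is at most `exp (-1.84 log n)`.
-/

open MeasureTheory ProbabilityTheory Real
open scoped NNReal Nat

namespace Real

lemma exp_neg_le_one_sub_add_sq_div_two {s : ℝ} (hs : 0 ≤ s) : exp (-s) ≤ 1 - s + s ^ 2 / 2 := by
  -- `(1 - s + s² / 2) (1 + s + s² / 2) = 1 + s⁴ / 4`
  have h := quadratic_le_exp_of_nonneg hs
  rw [exp_neg, inv_le_iff_one_le_mul₀ (exp_pos s)]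
  nlinarith [sq_nonneg (s - 1), pow_nonneg hs 4]

noncomputable def bennettFun (u : ℝ) : ℝ := (1 + u) * log (1 + u) - u

lemma bennettFun_tangent_le {a u : ℝ} (ha : -1 < a) (hu : -1 < u) :
    bennettFun a + log (1 + a) * (u - a) ≤ bennettFun u := by
  have ha' : 0 < 1 + a := by linarith
  have hu' : 0 < 1 + u := by linarith
  have hlog : 1 - (1 + a) / (1 + u) ≤ log (1 + u) - log (1 + a) := by
    simpa [log_div hu'.ne' ha'.ne', inv_div] using one_sub_inv_le_log_of_pos (div_pos hu' ha')
  have key : u - a ≤ (1 + u) * (log (1 + u) - log (1 + a)) := calc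
    u - a = (1 + u) * (1 - (1 + a) / (1 + u)) := by field_simp; ring
    _ ≤ _ := mul_le_mul_of_nonneg_left hlog hu'.le
  unfold bennettFun
  linarith

lemma sq_div_add_two_le_bennettFun {u : ℝ} (hu : 0 ≤ u) : u ^ 2 / (u + 2) ≤ bennettFun u := by
  have hlog := le_log_one_add_of_nonneg hu
  rw [div_le_iff₀ (by positivity)] at hlog
  rw [div_le_iff₀ (by positivity), bennettFun]
  nlinarith

lemma bennettFun_ge_of_sq_le {u : ℝ} (hu : 0 ≤ u) (hu2 : u ^ 2 ≤ 16 * exp 3) :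
    0.115 * u ^ 2 ≤ bennettFun u := by
  -- Up to `u = 6.5` the bound `u² / (u + 2)` suffices; beyond, the tangent line of the convex
  -- function `bennettFun` at `15` stays above `0.115 u²` up to `17.928 > 4 e^{3/2}`.
  have hexp3 : exp 3 < 20.086 := by
    calc exp 3 = exp 1 ^ 3 := by rw [← exp_nat_mul]; norm_num
      _ < 2.7182818286 ^ 3 := by gcongr; exact exp_one_lt_d9
      _ < 20.086 := by norm_num
  have hu_le : u ≤ 17.928 := by nlinarith
  rcases le_total u 6.5 with hsmall | hlarge
  · calc 0.115 * u ^ 2 ≤ u ^ 2 / (u + 2) := by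
          rw [le_div_iff₀ (by positivity)]
          nlinarith [sq_nonneg u]
      _ ≤ bennettFun u := sq_div_add_two_le_bennettFun hu
  · have hlog16 : 2.7725887 < log (1 + 15) := by
      rw [show (1 + 15 : ℝ) = 2 ^ 4 by norm_num, log_pow]
      linarith [log_two_gt_d9]
    have htangent := bennettFun_tangent_le (a := 15) (u := u) (by norm_num) (by linarith)
    have hline : 2.7725887 * (u + 1) - 15 ≤ bennettFun u := by
      have := mul_le_mul_of_nonneg_right hlog16.le (by linarith : (0 : ℝ) ≤ u + 1)
      rw [bennettFun] at htangent
      linear_combination htangent + this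
    nlinarith [mul_nonneg (sub_nonneg.2 hlarge) (sub_nonneg.2 hu_le)]

end Real

namespace ProbabilityTheory

lemma hasSum_exp_mul_poissonMeasure (r : ℝ≥0) (t : ℝ) :
    HasSum (fun n : ℕ => exp (-r) * r ^ n / n ! * exp (t * n)) (exp (r * (exp t - 1))) := by
  have hexp : HasSum (fun n : ℕ => (r * exp t) ^ n / n !) (exp (r * exp t)) := by
    rw [exp_eq_exp_ℝ]
    exact NormedSpace.expSeries_div_hasSum_exp _
  have hterm : (fun n : ℕ => exp (-r) * r ^ n / n ! * exp (t * n)) =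
      fun n => exp (-r) * ((r * exp t) ^ n / n !) := by
    ext n
    rw [mul_comm t, exp_nat_mul, mul_pow]
    ring
  rw [hterm, show (r : ℝ) * (exp t - 1) = -r + r * exp t by ring, exp_add]
  exact hexp.mul_left _

lemma integrable_exp_mul_poissonMeasure (r : ℝ≥0) (t : ℝ) :
    Integrable (fun n : ℕ => exp (t * n)) (poissonMeasure r) := by
  rw [integrable_poissonMeasure_iff]
  simpa only [norm_of_nonneg (exp_nonneg _)] using (hasSum_exp_mul_poissonMeasure r t).summable

lemma mgf_poissonMeasure (r : ℝ≥0) (t : ℝ) :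
    mgf (fun n : ℕ => (n : ℝ)) (poissonMeasure r) t = exp (r * (exp t - 1)) := by
  rw [mgf, integral_poissonMeasure]
  exact (hasSum_exp_mul_poissonMeasure r t).tsum_eq

lemma poissonMeasure_ge_le_exp (r : ℝ≥0) {t : ℝ} (ht : 0 ≤ t) (a : ℝ) :
    poissonMeasure r {n | a ≤ (n : ℝ)} ≤ ENNReal.ofReal (exp (r * (exp t - 1) - t * a)) := by
  rw [← ofReal_measureReal]
  refine ENNReal.ofReal_le_ofReal ?_
  have h := measure_ge_le_exp_mul_mgf a ht (integrable_exp_mul_poissonMeasure r t)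
  rw [mgf_poissonMeasure, ← exp_add] at h
  convert h using 2
  ring

lemma poissonMeasure_le_le_exp (r : ℝ≥0) {t : ℝ} (ht : t ≤ 0) (a : ℝ) :
    poissonMeasure r {n | (n : ℝ) ≤ a} ≤ ENNReal.ofReal (exp (r * (exp t - 1) - t * a)) := by
  rw [← ofReal_measureReal]
  refine ENNReal.ofReal_le_ofReal ?_
  have h := measure_le_le_exp_mul_mgf a ht (integrable_exp_mul_poissonMeasure r t)
  rw [mgf_poissonMeasure, ← exp_add] at h
  convert h using 2
  ring

lemma poissonMeasure_add_le_le (r : ℝ≥0) (hr : 0 < r) {x : ℝ} (hx : 0 ≤ x) :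
    poissonMeasure r {n | r + x ≤ (n : ℝ)} ≤ ENNReal.ofReal (exp (-(r * bennettFun (x / r)))) := by
  have hr' : (0 : ℝ) < r := hr
  have hu : 0 ≤ x / r := by positivity
  have h1u : 0 < 1 + x / r := by positivity
  refine (poissonMeasure_ge_le_exp r (log_nonneg (le_add_of_nonneg_right hu)) (r + x)).trans_eq ?_
  rw [exp_log h1u, bennettFun]
  congr 2
  field_simp
  ring

lemma poissonMeasure_le_sub_le (r : ℝ≥0) (hr : 0 < r) {x : ℝ} (hx : 0 ≤ x) :
    poissonMeasure r {n | (n : ℝ) ≤ r - x} ≤ ENNReal.ofReal (exp (-(x ^ 2 / (2 * r)))) := by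
  have hr' : (0 : ℝ) < r := hr
  have hs : 0 ≤ x / r := by positivity
  refine (poissonMeasure_le_le_exp r (neg_nonpos.2 hs) _).trans
    (ENNReal.ofReal_le_ofReal (exp_le_exp.2 ?_))
  have h := mul_le_mul_of_nonneg_left (exp_neg_le_one_sub_add_sq_div_two hs) hr'.le
  have hid : r * (1 - x / r + (x / r) ^ 2 / 2 - 1) - -(x / r) * (r - x) = -(x ^ 2 / (2 * r)) := by
    field_simp
    ring
  linarith

lemma poissonMeasure_le_abs_sub_le (r : ℝ≥0) (hr : 0 < r) {x : ℝ} (hx : 0 ≤ x) :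
    poissonMeasure r {n | x ≤ |(n : ℝ) - r|} ≤
      ENNReal.ofReal (exp (-(r * bennettFun (x / r)))) +
        ENNReal.ofReal (exp (-(x ^ 2 / (2 * r)))) := by
  have hsplit : {n : ℕ | x ≤ |(n : ℝ) - r|} ⊆ {n | r + x ≤ (n : ℝ)} ∪ {n | (n : ℝ) ≤ r - x} := by
    intro n (hn : x ≤ |(n : ℝ) - r|)
    rcases le_abs.1 hn with h | h
    · exact Or.inl (by simp only [Set.mem_ofPred_eq]; linarith)
    · exact Or.inr (by simp only [Set.mem_ofPred_eq]; linarith)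
  calc _ ≤ _ := measure_mono hsplit
    _ ≤ _ := measure_union_le _ _
    _ ≤ _ := add_le_add (poissonMeasure_add_le_le r hr hx) (poissonMeasure_le_sub_le r hr hx)

end ProbabilityTheory

theorem stmt_16_general (lam : NNReal) (n : ℕ) (hn : 2 ≤ n)
    (hbig : Real.exp (-3) * Real.log n ≤ (lam : ℝ)) :
    poissonMeasure lam {x : ℕ | 4 * Real.sqrt ((lam : ℝ) * Real.log n) ≤ |(x : ℝ) - (lam : ℝ)|}
      ≤ ENNReal.ofReal (2 * (n : ℝ)^(-1.84 : ℝ)) := by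
  have hrpow : (n : ℝ) ^ (-1.84 : ℝ) = exp (-(1.84 * log n)) := by
    rw [rpow_def_of_pos (by positivity)]
    ring_nf
  set L := log n
  have hL : 0 < L := log_pos (by exact_mod_cast hn)
  have hlam : (0 : ℝ) < lam := (mul_pos (exp_pos _) hL).trans_le hbig
  have hL_le : L ≤ exp 3 * lam := by
    rwa [exp_neg, inv_mul_le_iff₀ (exp_pos 3)] at hbig
  set x := 4 * sqrt (lam * L)
  have hx2 : x ^ 2 = 16 * (lam * L) := by
    rw [mul_pow, sq_sqrt (by positivity)]
    norm_num
  have hupper : 1.84 * L ≤ lam * bennettFun (x / lam) := calc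
    1.84 * L = lam * (0.115 * (x / lam) ^ 2) := by rw [div_pow, hx2]; field_simp; ring
    _ ≤ lam * bennettFun (x / lam) := by
      gcongr
      refine bennettFun_ge_of_sq_le (by positivity) ?_
      rw [div_pow, hx2, div_le_iff₀ (by positivity)]
      nlinarith
  have hlower : 1.84 * L ≤ x ^ 2 / (2 * lam) := by
    rw [hx2, le_div_iff₀ (by positivity)]
    nlinarith
  calc _ ≤ _ := poissonMeasure_le_abs_sub_le lam (NNReal.coe_pos.1 hlam) (by positivity)
    _ ≤ ENNReal.ofReal ((n : ℝ) ^ (-1.84 : ℝ)) + ENNReal.ofReal ((n : ℝ) ^ (-1.84 : ℝ)) := by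
      rw [hrpow]
      gcongr
    _ = _ := by rw [← ENNReal.ofReal_add (by positivity) (by positivity), two_mul]

/-- Poisson tail bound in the large-mean regime: if `X ~ Poisson(λ)` with `λ ≥ e⁻³ log n`
and `n ≥ 2`, then `Pr[|X - λ| ≥ 4√(λ log n)] ≤ 2n^{-1.84}`. -/
theorem stmt_16 (lam : NNReal) (hlam : 0 < lam) (n : ℕ) (hn : 2 ≤ n)
    (hbig : Real.exp (-3) * Real.log n ≤ (lam : ℝ)) :
    poissonMeasure lam {x : ℕ | 4 * Real.sqrt ((lam : ℝ) * Real.log n) ≤ |(x : ℝ) - (lam : ℝ)|}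
      ≤ ENNReal.ofReal (2 * (n : ℝ)^(-1.84 : ℝ)) :=
  stmt_16_general lam n hn hbig
end
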